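/- Let P_i^{(j)} be a solution of the simultaneous Padé approximation problem for f_0, …, f_{L−1}, and fix j with 0 ≤ j ≤ L−1. Denote by P̃_i^{(j)} the ith entry of the column vector P̃^{(j)}. Then for all a ≠ b in {0, …, L−1}: if a < j and b < j, then f_a·P̃_b^{(j)} − f_b·P̃_a^{(j)} = O(w^{nL+1}); otherwise f_a·P̃_b^{(j)} − f_b·P̃_a^{(j)} = O(w^{nL}). -/

import Mathlib

/-!
Write `D_i = f_0 P̃_i^{(j)} - f_i P̃_0^{(j)}`. Each defining condition of a simultaneous Padé
solution says `D_i = O(w^{nL})`, and for `0 < i < j` both `P̃_i^{(j)}` and `P̃_0^{(j)}` carry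
a factor `w`, so then `D_i = O(w^{nL+1})`. The identity
`f_0 (f_a P̃_b - f_b P̃_a) = f_a D_b - f_b D_a` and the invertibility of `f_0` transfer
these orders to `f_a P̃_b - f_b P̃_a`.
-/

noncomputable section

/-- `g = O(w^N)`: the coefficients of `w^0, …, w^{N-1}` in `g` vanish. -/
def bigOh (g : PowerSeries ℂ) (N : ℕ) : Prop := ∀ k < N, PowerSeries.coeff k g = 0

/-- The entries of the row vector Q̃^{(i)} = (Q_0^{(i)}, …, Q_i^{(i)}, wQ_{i+1}^{(i)}, …, wQ_{L-1}^{(i)}). -/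
def Qtil {L : ℕ} (Q : Fin L → Fin L → Polynomial ℂ) (i j : Fin L) : Polynomial ℂ :=
  if (j : ℕ) ≤ (i : ℕ) then Q i j else Polynomial.X * Q i j

/-- A solution of the Hermite–Padé approximation problem. -/
def IsHPSol {L : ℕ} (n : ℕ) (f : Fin L → PowerSeries ℂ)
    (Q : Fin L → Fin L → Polynomial ℂ) : Prop :=
  (∀ i j, (Q i j).degree ≤ ((n - 1 + if i = j then 1 else 0 : ℕ) : WithBot ℕ)) ∧
  ∀ i, bigOh (∑ j, f j * ((Qtil Q i j : Polynomial ℂ) : PowerSeries ℂ)) (n * L)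

/-- The entries of the column vector P̃^{(j)} = ᵀ(wP_0^{(j)}, …, wP_{j-1}^{(j)}, P_j^{(j)}, …, P_{L-1}^{(j)}). -/
def Ptil {L : ℕ} (P : Fin L → Fin L → Polynomial ℂ) (j i : Fin L) : Polynomial ℂ :=
  if (i : ℕ) < (j : ℕ) then Polynomial.X * P j i else P j i

/-- A solution of the simultaneous Padé approximation problem.
Here `P j i` denotes the polynomial `P_i^{(j)}`. -/
def IsSPSol {L : ℕ} [NeZero L] (n : ℕ) (f : Fin L → PowerSeries ℂ)
    (P : Fin L → Fin L → Polynomial ℂ) : Prop :=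
  (∀ j i, (P j i).degree ≤ ((n * (L - 1) - 1 + if i = j then 1 else 0 : ℕ) : WithBot ℕ)) ∧
  (∀ i : Fin L, 1 ≤ (i : ℕ) →
    bigOh (f 0 * ((P 0 i : Polynomial ℂ) : PowerSeries ℂ)
      - f i * ((P 0 0 : Polynomial ℂ) : PowerSeries ℂ)) (n * L)) ∧
  (∀ j i : Fin L, 1 ≤ (j : ℕ) → 1 ≤ (i : ℕ) → (i : ℕ) < (j : ℕ) →
    bigOh (f 0 * ((P j i : Polynomial ℂ) : PowerSeries ℂ)
      - f i * ((P j 0 : Polynomial ℂ) : PowerSeries ℂ)) (n * L)) ∧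
  (∀ j i : Fin L, 1 ≤ (j : ℕ) → (j : ℕ) ≤ (i : ℕ) →
    bigOh (f 0 * ((P j i : Polynomial ℂ) : PowerSeries ℂ)
      - f i * ((Polynomial.X * P j 0 : Polynomial ℂ) : PowerSeries ℂ)) (n * L))

open PowerSeries

theorem bigOh_iff_X_pow_dvd {g : PowerSeries ℂ} {N : ℕ} : bigOh g N ↔ X ^ N ∣ g :=
  X_pow_dvd_iff.symm

theorem dvd_mul_sub_mul_of_dvd_cross {R : Type*} [CommRing R] {d f₀ fa fb p₀ pa pb : R}
    (hf₀ : IsUnit f₀) (ha : d ∣ f₀ * pa - fa * p₀) (hb : d ∣ f₀ * pb - fb * p₀) :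
    d ∣ fa * pb - fb * pa := by
  have hcross : f₀ * (fa * pb - fb * pa) = fa * (f₀ * pb - fb * p₀) - fb * (f₀ * pa - fa * p₀) := by
    ring
  rw [← hf₀.dvd_mul_left, hcross]
  exact dvd_sub (hb.mul_left _) (ha.mul_left _)

namespace IsSPSol

variable {L n : ℕ} [NeZero L] {f : Fin L → PowerSeries ℂ} {P : Fin L → Fin L → Polynomial ℂ}

theorem X_pow_succ_dvd_of_lt (hP : IsSPSol n f P) {i j : Fin L} (hij : (i : ℕ) < j) :
    X ^ (n * L + 1) ∣ f 0 * (Ptil P j i : PowerSeries ℂ) - f i * (Ptil P j 0 : PowerSeries ℂ) := by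
  have hj : 0 < (j : ℕ) := (Nat.zero_le _).trans_lt hij
  rcases Nat.eq_zero_or_pos (i : ℕ) with hi | hi
  · rw [show i = 0 from Fin.ext hi, sub_self]
    exact dvd_zero _
  have hPtil0 : Ptil P j 0 = Polynomial.X * P j 0 := if_pos hj
  have hPtil : Ptil P j i = Polynomial.X * P j i := if_pos hij
  have hfactor : f 0 * (Ptil P j i : PowerSeries ℂ) - f i * (Ptil P j 0 : PowerSeries ℂ)
      = X * (f 0 * (P j i : PowerSeries ℂ) - f i * (P j 0 : PowerSeries ℂ)) := by
    simp only [hPtil0, hPtil, Polynomial.coe_mul, Polynomial.coe_X]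
    ring
  rw [hfactor, pow_succ']
  exact mul_dvd_mul_left X (bigOh_iff_X_pow_dvd.mp (hP.2.2.1 j i hj hi hij))

theorem X_pow_dvd_of_le (hP : IsSPSol n f P) {i j : Fin L} (hji : (j : ℕ) ≤ i) :
    X ^ (n * L) ∣ f 0 * (Ptil P j i : PowerSeries ℂ) - f i * (Ptil P j 0 : PowerSeries ℂ) := by
  rw [← bigOh_iff_X_pow_dvd]
  have hPtil : Ptil P j i = P j i := if_neg (not_lt.mpr hji)
  rcases Nat.eq_zero_or_pos (j : ℕ) with hj | hj
  · obtain rfl : j = 0 := Fin.ext hj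
    rcases Nat.eq_zero_or_pos (i : ℕ) with hi | hi
    · rw [show i = 0 from Fin.ext hi, sub_self]
      exact fun _ _ => map_zero _
    · have hPtil0 : Ptil P 0 0 = P 0 0 := if_neg (lt_irrefl _)
      simpa only [hPtil, hPtil0] using hP.2.1 i hi
  · have hPtil0 : Ptil P j 0 = Polynomial.X * P j 0 := if_pos hj
    simpa only [hPtil, hPtil0] using hP.2.2.2 j i hj hji

theorem X_pow_dvd (hP : IsSPSol n f P) (i j : Fin L) :
    X ^ (n * L) ∣ f 0 * (Ptil P j i : PowerSeries ℂ) - f i * (Ptil P j 0 : PowerSeries ℂ) := by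
  rcases lt_or_ge (i : ℕ) j with hij | hji
  · exact (pow_dvd_pow X (Nat.le_succ _)).trans (hP.X_pow_succ_dvd_of_lt hij)
  · exact hP.X_pow_dvd_of_le hji

end IsSPSol

theorem Ptil_remark_general (L n : ℕ) [NeZero L]
    (f : Fin L → PowerSeries ℂ) (hf0 : PowerSeries.constantCoeff (f 0) ≠ 0)
    (P : Fin L → Fin L → Polynomial ℂ) (hP : IsSPSol n f P) (j : Fin L) :
    ∀ a b : Fin L, a ≠ b →
      (((a : ℕ) < (j : ℕ) ∧ (b : ℕ) < (j : ℕ)) →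
        bigOh (f a * ((Ptil P j b : Polynomial ℂ) : PowerSeries ℂ)
          - f b * ((Ptil P j a : Polynomial ℂ) : PowerSeries ℂ)) (n * L + 1)) ∧
      (¬((a : ℕ) < (j : ℕ) ∧ (b : ℕ) < (j : ℕ)) →
        bigOh (f a * ((Ptil P j b : Polynomial ℂ) : PowerSeries ℂ)
          - f b * ((Ptil P j a : Polynomial ℂ) : PowerSeries ℂ)) (n * L)) := by
  intro a b _
  have hunit : IsUnit (f 0) := isUnit_iff_constantCoeff.mpr (Ne.isUnit hf0)
  refine ⟨fun ⟨haj, hbj⟩ => ?_, fun _ => ?_⟩ <;> rw [bigOh_iff_X_pow_dvd]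
  · exact dvd_mul_sub_mul_of_dvd_cross hunit (hP.X_pow_succ_dvd_of_lt haj)
      (hP.X_pow_succ_dvd_of_lt hbj)
  · exact dvd_mul_sub_mul_of_dvd_cross hunit (hP.X_pow_dvd a j) (hP.X_pow_dvd b j)

/-- Order of vanishing of `f_a P̃_b^{(j)} - f_b P̃_a^{(j)}`. -/
theorem Ptil_remark (L n : ℕ) (hL : 2 ≤ L) [NeZero L] (hn : 0 < n)
    (f : Fin L → PowerSeries ℂ) (hf0 : PowerSeries.constantCoeff (f 0) ≠ 0)
    (P : Fin L → Fin L → Polynomial ℂ) (hP : IsSPSol n f P) (j : Fin L) :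
    ∀ a b : Fin L, a ≠ b →
      (((a : ℕ) < (j : ℕ) ∧ (b : ℕ) < (j : ℕ)) →
        bigOh (f a * ((Ptil P j b : Polynomial ℂ) : PowerSeries ℂ)
          - f b * ((Ptil P j a : Polynomial ℂ) : PowerSeries ℂ)) (n * L + 1)) ∧
      (¬((a : ℕ) < (j : ℕ) ∧ (b : ℕ) < (j : ℕ)) →
        bigOh (f a * ((Ptil P j b : Polynomial ℂ) : PowerSeries ℂ)
          - f b * ((Ptil P j a : Polynomial ℂ) : PowerSeries ℂ)) (n * L)) :=
  Ptil_remark_general L n f hf0 P hP j
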